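/- The stability of W_δ compared with W holds even under one-sided noise: for every finite voter set R, every δ ∈ (0,1), every voting profile c ∈ {c0,c1}^R, every α ∈ (0,1], and every probability distribution y over {c0,c1}^R such that for every voter r ∈ R it holds Pr_{ỹ∼y}(ỹ_r = c1 and c_r = c0) ≤ α, one has E_{ỹ∼y}[W_δ(ỹ)] ≥ W(c) · (1 − α/δ). -/
import Mathlib


open Finset
open Finset

/-- Number of voters voting for candidate `c0` (encoded as `true`). -/
def votesFor {R : Type*} [Fintype R] (c : R → Bool) : ℕ :=
  (univ.filter (fun r => c r = true)).card

/-- The majority threshold `⌈|R|/2⌉`. -/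
noncomputable def majThreshold (R : Type*) [Fintype R] : ℕ :=
  ⌈(Fintype.card R : ℝ) / 2⌉₊

/-- The majority-voting function `W`: value `1` iff at least `⌈|R|/2⌉` voters vote `c0`. -/
noncomputable def W {R : Type*} [Fintype R] (c : R → Bool) : ℝ :=
  if majThreshold R ≤ votesFor c then 1 else 0

/-- The relaxed majority-voting function `W_δ`: value `1` iff at least
`⌈(1-δ)·⌈|R|/2⌉⌉` voters vote `c0`. -/
noncomputable def Wrel {R : Type*} [Fintype R] (δ : ℝ) (c : R → Bool) : ℝ :=
  if ⌈(1 - δ) * (majThreshold R : ℝ)⌉₊ ≤ votesFor c then 1 else 0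


/-- The stability of `W_δ` compared with `W` holds even under one-sided noise: it suffices
that, for every voter `r`, the probability that `ỹ_r = c1` while `c_r = c0` is at most `α`
(`c0` is encoded as `true`, `c1` as `false`). -/
theorem Wrel_stable_compared_W_one_sided {R : Type*} [Fintype R] [DecidableEq R]
    (δ α : ℝ) (hδ : δ ∈ Set.Ioo (0 : ℝ) 1) (hα : α ∈ Set.Ioc (0 : ℝ) 1)
    (c : R → Bool) (y : (R → Bool) → ℝ)
    (hy0 : ∀ c', 0 ≤ y c') (hy1 : ∑ c', y c' = 1)
    (hnoisy : ∀ r : R,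
      ∑ c' ∈ univ.filter (fun c' : R → Bool => c' r = false ∧ c r = true), y c' ≤ α) :
    W c * (1 - α / δ) ≤ ∑ c', y c' * Wrel δ c' := by
  obtain ⟨hδ0, hδ1⟩ := hδ
  obtain ⟨hα0, hα1⟩ := hα
  have hWrel01 : ∀ c' : R → Bool, Wrel δ c' = 0 ∨ Wrel δ c' = 1 := by
    intro c'; unfold Wrel; split <;> simp
  have hsumnn : 0 ≤ ∑ c', y c' * Wrel δ c' := by
    apply Finset.sum_nonneg; intro c' _
    rcases hWrel01 c' with h | h <;> rw [h] <;> simp [hy0 c']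
  by_cases hW : majThreshold R ≤ votesFor c
  · have hWc : W c = 1 := if_pos hW
    rw [hWc, one_mul]
    set T := majThreshold R with hT
    by_cases hT0 : T = 0
    · have hall : ∀ c' : R → Bool, Wrel δ c' = 1 := by
        intro c'; unfold Wrel
        rw [if_pos]; rw [← hT, hT0]; simp
      simp only [hall, mul_one, hy1]
      have : 0 ≤ α / δ := by positivity
      linarith
    · have hTpos : 0 < (T : ℝ) := by
        exact_mod_cast Nat.pos_of_ne_zero hT0
      unfold votesFor at hW
      obtain ⟨S, hS, hScard⟩ := Finset.exists_subset_card_eq hW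
      have hkey : ∀ c' : R → Bool,
          δ * T * (1 - Wrel δ c') ≤ ((S.filter (fun r => c' r = false)).card : ℝ) := by
        intro c'
        rcases hWrel01 c' with h | h
        · have hlt : (votesFor c' : ℝ) < (1 - δ) * T := by
            have hnle : ¬ (⌈(1 - δ) * (T : ℝ)⌉₊ ≤ votesFor c') := by
              intro hc
              unfold Wrel at h; rw [← hT] at h; rw [if_pos hc] at h; norm_num at h
            exact Nat.lt_ceil.mp (lt_of_not_ge hnle)
          have hsplit : (S.filter (fun r => c' r = true)).card
              + (S.filter (fun r => c' r = false)).card = T := by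
            rw [show (S.filter fun r => c' r = false)
                = S.filter (fun r => ¬ c' r = true) from
                Finset.filter_congr (by intro r _; simp), ← hScard]
            exact Finset.card_filter_add_card_filter_not (p := fun r => c' r = true)
          have hsub : (S.filter (fun r => c' r = true)).card ≤ votesFor c' := by
            apply Finset.card_le_card
            intro r hr
            simp only [Finset.mem_filter, Finset.mem_univ, true_and, votesFor]
            exact (Finset.mem_filter.mp hr).2
          rw [h]
          have h1 : ((S.filter (fun r => c' r = true)).card : ℝ)
              + ((S.filter (fun r => c' r = false)).card : ℝ) = T := by
            exact_mod_cast hsplit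
          have h2 : ((S.filter (fun r => c' r = true)).card : ℝ) ≤ (votesFor c' : ℝ) := by
            exact_mod_cast hsub
          nlinarith
        · rw [h]; simp
      have hexp : ∑ c', y c' * ((S.filter (fun r => c' r = false)).card : ℝ) ≤ α * T := by
        have hrw : ∀ c' : R → Bool,
            y c' * ((S.filter (fun r => c' r = false)).card : ℝ)
            = ∑ r ∈ S, (if c' r = false then y c' else 0) := by
          intro c'
          rw [Finset.sum_ite, Finset.sum_const, Finset.sum_const]
          simp [mul_comm]
        calc ∑ c', y c' * ((S.filter (fun r => c' r = false)).card : ℝ)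
            = ∑ c', ∑ r ∈ S, (if c' r = false then y c' else 0) := by
              exact Finset.sum_congr rfl fun c' _ => hrw c'
          _ = ∑ r ∈ S, ∑ c' : R → Bool, (if c' r = false then y c' else 0) :=
              Finset.sum_comm
          _ ≤ ∑ r ∈ S, α := by
              apply Finset.sum_le_sum
              intro r hr
              have hcr : c r = true := by
                have := hS hr
                simpa using (Finset.mem_filter.mp this).2
              have := hnoisy r
              rw [Finset.sum_filter] at this
              calc ∑ c' : R → Bool, (if c' r = false then y c' else 0)
                  = ∑ c' : R → Bool, (if c' r = false ∧ c r = true then y c' else 0) := by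
                    apply Finset.sum_congr rfl
                    intro c' _
                    simp [hcr]
                _ ≤ α := this
          _ = α * T := by rw [Finset.sum_const, hScard]; ring
      have hbound : ∑ c', y c' * (δ * T * (1 - Wrel δ c')) ≤ α * T := by
        calc ∑ c', y c' * (δ * T * (1 - Wrel δ c'))
            ≤ ∑ c', y c' * ((S.filter (fun r => c' r = false)).card : ℝ) := by
              apply Finset.sum_le_sum
              intro c' _
              exact mul_le_mul_of_nonneg_left (hkey c') (hy0 c')
          _ ≤ α * T := hexp
      have hexpand : ∑ c', y c' * (δ * T * (1 - Wrel δ c'))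
          = δ * T * (1 - ∑ c', y c' * Wrel δ c') := by
        have hterm : ∀ c' : R → Bool, y c' * (δ * T * (1 - Wrel δ c'))
            = δ * T * y c' - δ * T * (y c' * Wrel δ c') := fun c' => by ring
        rw [Finset.sum_congr rfl fun c' _ => hterm c', Finset.sum_sub_distrib,
          ← Finset.mul_sum, ← Finset.mul_sum, hy1]
        ring
      rw [hexpand] at hbound
      have h1 : δ * (1 - ∑ c', y c' * Wrel δ c') ≤ α := by nlinarith
      have h2 : 1 - ∑ c', y c' * Wrel δ c' ≤ α / δ := by
        rw [le_div_iff₀ hδ0]; linarith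
      linarith
  · have hWc : W c = 0 := if_neg hW
    rw [hWc, zero_mul]
    exact hsumnn
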